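/- Let A be a C*-algebra, X a (right) Hilbert A-module and φ : A → B(X) a left action. If φ(J_X) = K(X), where J_X = φ⁻¹(K(X)) ∩ (ker φ)^⊥, then X is a Hilbert A-bimodule with left inner product given by ⟨⟨ξ,η⟩⟩ = (φ|_{J_X})⁻¹(θ_{ξ,η}) ∈ J_X; that is, the map ⟨⟨·,·⟩⟩ : X × X → A so defined is linear in the first variable and satisfies ⟨⟨φ(a)ξ, η⟩⟩ = a⟨⟨ξ,η⟩⟩, ⟨⟨ξ,η⟩⟩ = ⟨⟨η,ξ⟩⟩*, ⟨⟨ξ,ξ⟩⟩ ≥ 0, and φ(⟨⟨ξ,η⟩⟩)ζ = ξ·⟨η,ζ⟩_X for all ξ,η,ζ ∈ X and a ∈ A. -/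

import Mathlib

open scoped RightActions

/-- The December 2024 Mathlib `CStarModule` (right Hilbert module, right action through `Aᵐᵒᵖ`),
reproduced verbatim since Mathlib's `CStarModule` is now a left-module notion. -/
class CStarModuleOld (A E : outParam Type*) [NonUnitalSemiring A] [StarRing A] [Module ℂ A]
    [AddCommGroup E] [Module ℂ E] [PartialOrder A] [SMul Aᵐᵒᵖ E] [Norm A] [Norm E]
    extends Inner A E where
  inner_add_right {x} {y} {z} : inner x (y + z) = inner x y + inner x z
  inner_self_nonneg {x} : 0 ≤ inner x x
  inner_self {x} : inner x x = 0 ↔ x = 0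
  inner_op_smul_right {a : A} {x y : E} : inner x (y <• a) = inner x y * a
  inner_smul_right_complex {z : ℂ} {x} {y} : inner x (z • y) = z • inner x y
  star_inner x y : star (inner x y) = inner y x
  norm_eq_sqrt_norm_inner_self x : ‖x‖ = Real.sqrt ‖inner x x‖

variable {A X : Type*} [NonUnitalCStarAlgebra A] [PartialOrder A] [StarOrderedRing A]
  [NormedAddCommGroup X] [NormedSpace ℂ X] [SMul Aᵐᵒᵖ X] [CStarModuleOld A X] [CompleteSpace X]

/-- `K(X)`: the closed linear span in `B(X)` of the rank-one operators
`θ_{ξ,η} : ζ ↦ ξ • ⟪η, ζ⟫`. -/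
def compactOps (A X : Type*) [NonUnitalCStarAlgebra A] [PartialOrder A] [StarOrderedRing A]
    [NormedAddCommGroup X] [NormedSpace ℂ X] [SMul Aᵐᵒᵖ X] [CStarModuleOld A X]
    [CompleteSpace X] : Set (X →L[ℂ] X) :=
  closure (Submodule.span ℂ
    {T : X →L[ℂ] X | ∃ ξ η : X, ∀ ζ : X, T ζ = ξ <• (inner A η ζ : A)} : Set (X →L[ℂ] X))

/-- The ideal `J_X = φ⁻¹(K(X)) ∩ (ker φ)^⊥` of Katsura, as a subset of `A`. -/
def KatsuraIdeal (φ : A →ₙₐ[ℂ] (X →L[ℂ] X)) : Set A :=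
  {a : A | φ a ∈ compactOps A X} ∩ {a : A | ∀ b : A, φ b = 0 → a * b = 0}

/-!
Since `φ(J_X) = K(X)`, every rank-one operator `θ_{ξ,η}` has a preimage in `J_X`, and only one:
the kernel of `φ` is a star-closed ideal, so an element `d` of `(ker φ)^⊥` with `φ d = 0` has
`d d^* = 0`. Each identity of a left inner product is thus read off from the corresponding
identity between rank-one operators. Symmetry `⟨⟨ξ,η⟩⟩ = ⟨⟨η,ξ⟩⟩^*` also needs `(ker φ)^⊥` to be
star-closed, which holds because a left annihilator of a star-closed ideal is a right one too.
For positivity, put `a = ⟨⟨ξ,ξ⟩⟩` and `n = a⁻`: then `n a n = -n³`, while `φ(n a n)` is a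
positive operator because `θ_{ξ,ξ}` is; so `φ(n³) = 0`, hence `n⁴ = -a n³ = 0` and `a = a⁺ ≥ 0`.
-/

namespace CStarModuleOld

section Algebraic

omit [StarOrderedRing A] [CompleteSpace X]

variable (A) in
def innerAddHom (x : X) : X →+ A := AddMonoidHom.mk' (inner A x) fun _ _ => inner_add_right

@[simp]
lemma inner_zero_right {x : X} : inner A x (0 : X) = 0 := map_zero (innerAddHom A x)

@[simp]
lemma inner_neg_right {x y : X} : inner A x (-y) = -inner A x y := map_neg (innerAddHom A x) y

@[simp]
lemma inner_sub_right {x y z : X} : inner A x (y - z) = inner A x y - inner A x z :=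
  map_sub (innerAddHom A x) y z

@[simp]
lemma inner_zero_left {x : X} : inner A (0 : X) x = 0 := by
  rw [← star_inner, inner_zero_right, star_zero]

@[simp]
lemma inner_sub_left {x y z : X} : inner A (x - y) z = inner A x z - inner A y z := by
  rw [← star_inner z, inner_sub_right, star_sub, star_inner, star_inner]

@[simp]
lemma inner_op_smul_left {a : A} {x y : X} : inner A (x <• a) y = star a * inner A x y := by
  rw [← star_inner y, inner_op_smul_right, star_mul, star_inner]

lemma inner_smul_right_real {r : ℝ} {x y : X} : inner A x (r • y) = r • inner A x y := by
  simpa only [Complex.coe_smul] using inner_smul_right_complex (A := A) (z := (r : ℂ)) (x := x)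

lemma inner_smul_left_real {r : ℝ} {x y : X} : inner A (r • x) y = r • inner A x y := by
  rw [← star_inner y, inner_smul_right_real, star_smul, star_trivial, star_inner]

lemma ext_inner_left {x y : X} (h : ∀ z : X, inner A z x = inner A z y) : x = y :=
  sub_eq_zero.mp <| inner_self.mp <| by rw [inner_sub_right, h, sub_self]

lemma op_smul_add (x y : X) (b : A) : (x + y) <• b = x <• b + y <• b :=
  ext_inner_left (A := A) fun z => by simp only [inner_op_smul_right, inner_add_right, add_mul]

lemma op_smul_complex_smul (c : ℂ) (x : X) (b : A) : (c • x) <• b = c • (x <• b) :=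
  ext_inner_left (A := A) fun z => by
    simp only [inner_op_smul_right, inner_smul_right_complex, smul_mul_assoc]

lemma op_add_smul (x : X) (b c : A) : x <• (b + c) = x <• b + x <• c :=
  ext_inner_left (A := A) fun z => by
    rw [inner_add_right, inner_op_smul_right, inner_op_smul_right, inner_op_smul_right, mul_add]

lemma op_complex_smul_smul (c : ℂ) (x : X) (b : A) : x <• (c • b) = c • (x <• b) :=
  ext_inner_left (A := A) fun z => by
    rw [inner_smul_right_complex, inner_op_smul_right, inner_op_smul_right, mul_smul_comm]

variable (A) in
lemma norm_sq_eq (x : X) : ‖x‖ ^ 2 = ‖inner A x x‖ := by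
  rw [norm_eq_sqrt_norm_inner_self (A := A) x, Real.sq_sqrt (norm_nonneg _)]

lemma norm_op_smul_le (x : X) (b : A) : ‖x <• b‖ ≤ ‖x‖ * ‖b‖ := by
  have h : ‖x <• b‖ ^ 2 ≤ (‖x‖ * ‖b‖) ^ 2 :=
    calc ‖x <• b‖ ^ 2 = ‖star b * inner A x x * b‖ := by
          rw [norm_sq_eq A, inner_op_smul_left, inner_op_smul_right, mul_assoc]
      _ ≤ ‖star b‖ * ‖inner A x x‖ * ‖b‖ := norm_mul₃_le
      _ = (‖x‖ * ‖b‖) ^ 2 := by rw [norm_star, ← norm_sq_eq A]; ring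
  exact (pow_le_pow_iff_left₀ (norm_nonneg _) (by positivity) two_ne_zero).mp h

end Algebraic

omit [CompleteSpace X]

lemma inner_mul_inner_swap_le {x y : X} : inner A y x * inner A x y ≤ ‖x‖ ^ 2 • inner A y y := by
  rcases eq_or_ne x 0 with rfl | hx
  · simp
  set a := inner A x y with ha
  have key : (0 : A) ≤ ‖x‖ ^ 2 • (‖x‖ ^ 2 • inner A y y) - ‖x‖ ^ 2 • (star a * a) :=
    calc (0 : A) ≤ inner A (x <• a - ‖x‖ ^ 2 • y) (x <• a - ‖x‖ ^ 2 • y) := inner_self_nonneg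
      _ = star a * inner A x x * a - ‖x‖ ^ 2 • (star a * a) - ‖x‖ ^ 2 • (star a * a)
            + ‖x‖ ^ 2 • (‖x‖ ^ 2 • inner A y y) := by
          simp only [inner_sub_left, inner_sub_right, inner_op_smul_left, inner_op_smul_right,
            inner_smul_left_real, inner_smul_right_real, ← star_inner x y, ← ha, sub_mul,
            smul_sub, smul_mul_assoc, mul_assoc]
          abel
      _ ≤ ‖x‖ ^ 2 • (star a * a) - ‖x‖ ^ 2 • (star a * a) - ‖x‖ ^ 2 • (star a * a)
            + ‖x‖ ^ 2 • (‖x‖ ^ 2 • inner A y y) := by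
          gcongr
          rw [norm_sq_eq A]
          exact CStarAlgebra.star_left_conjugate_le_norm_smul (hb := star_inner x x)
      _ = _ := by abel
  rw [← star_inner x y]
  exact (smul_le_smul_iff_of_pos_left (pow_pos (norm_pos_iff.mpr hx) 2)).mp (sub_nonneg.mp key)

variable (X) in
lemma norm_inner_le {x y : X} : ‖inner A x y‖ ≤ ‖x‖ * ‖y‖ := by
  have h : ‖inner A x y‖ ^ 2 ≤ (‖x‖ * ‖y‖) ^ 2 :=
    calc ‖inner A x y‖ ^ 2 = ‖inner A y x * inner A x y‖ := by
          rw [← star_inner x y, CStarRing.norm_star_mul_self, pow_two]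
      _ ≤ ‖‖x‖ ^ 2 • inner A y y‖ := by
          refine CStarAlgebra.norm_le_norm_of_nonneg_of_le ?_ inner_mul_inner_swap_le
          rw [← star_inner x y]
          exact star_mul_self_nonneg _
      _ = (‖x‖ * ‖y‖) ^ 2 := by
          rw [norm_smul, Real.norm_of_nonneg (by positivity), ← norm_sq_eq A, mul_pow]
  exact (pow_le_pow_iff_left₀ (norm_nonneg _) (by positivity) two_ne_zero).mp h

variable (A) in
noncomputable def rankOne (ξ η : X) : X →L[ℂ] X :=
  LinearMap.mkContinuous
    { toFun := fun ζ => ξ <• inner A η ζ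
      map_add' := fun y z => by simp only [inner_add_right, op_add_smul]
      map_smul' := fun c y => by
        simp only [inner_smul_right_complex, op_complex_smul_smul, RingHom.id_apply] }
    (‖ξ‖ * ‖η‖) fun ζ =>
      calc ‖ξ <• inner A η ζ‖ ≤ ‖ξ‖ * ‖inner A η ζ‖ := norm_op_smul_le _ _
        _ ≤ ‖ξ‖ * (‖η‖ * ‖ζ‖) := by gcongr; exact norm_inner_le X
        _ = ‖ξ‖ * ‖η‖ * ‖ζ‖ := (mul_assoc _ _ _).symm

@[simp]
lemma rankOne_apply (ξ η ζ : X) : rankOne A ξ η ζ = ξ <• inner A η ζ := rfl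

lemma rankOne_add_left (ξ₁ ξ₂ η : X) :
    rankOne A (ξ₁ + ξ₂) η = rankOne A ξ₁ η + rankOne A ξ₂ η := by
  ext ζ
  simp [op_smul_add]

lemma rankOne_smul_left (c : ℂ) (ξ η : X) : rankOne A (c • ξ) η = c • rankOne A ξ η := by
  ext ζ
  simp [op_smul_complex_smul]

lemma mul_rankOne {T : X →L[ℂ] X} (hT : ∀ (ξ : X) (b : A), T (ξ <• b) = T ξ <• b) (ξ η : X) :
    T * rankOne A ξ η = rankOne A (T ξ) η := by
  ext ζ
  simp [hT]

lemma inner_rankOne_apply_left (ξ η z ζ : X) :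
    inner A (rankOne A η ξ z) ζ = inner A z (rankOne A ξ η ζ) := by
  simp only [rankOne_apply, inner_op_smul_left, inner_op_smul_right, star_inner]

lemma inner_rankOne_self_apply_nonneg (ξ ζ : X) : 0 ≤ inner A ζ (rankOne A ξ ξ ζ) := by
  rw [rankOne_apply, inner_op_smul_right, ← star_inner]
  exact star_mul_self_nonneg _

end CStarModuleOld

open CStarModuleOld

lemma rankOne_mem_compactOps (ξ η : X) : rankOne A ξ η ∈ compactOps A X :=
  subset_closure (Submodule.subset_span ⟨ξ, η, fun _ => rfl⟩)

section KerAnnihilator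

omit [PartialOrder A] [StarOrderedRing A] [SMul Aᵐᵒᵖ X] [CStarModuleOld A X] [CompleteSpace X]

def kerAnnihilator (φ : A →ₙₐ[ℂ] (X →L[ℂ] X)) : Set A := {a | ∀ b, φ b = 0 → a * b = 0}

variable {φ : A →ₙₐ[ℂ] (X →L[ℂ] X)}

lemma add_mem_kerAnnihilator {a b : A} (ha : a ∈ kerAnnihilator φ) (hb : b ∈ kerAnnihilator φ) :
    a + b ∈ kerAnnihilator φ := fun k hk => by rw [add_mul, ha k hk, hb k hk, add_zero]

lemma smul_mem_kerAnnihilator (c : ℂ) {a : A} (ha : a ∈ kerAnnihilator φ) :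
    c • a ∈ kerAnnihilator φ := fun k hk => by rw [smul_mul_assoc, ha k hk, smul_zero]

lemma mul_mem_kerAnnihilator (b : A) {a : A} (ha : a ∈ kerAnnihilator φ) :
    b * a ∈ kerAnnihilator φ := fun k hk => by rw [mul_assoc, ha k hk, mul_zero]

end KerAnnihilator

section LeftAction

omit [CompleteSpace X]

section Kernel

omit [StarOrderedRing A]

variable {φ : A →ₙₐ[ℂ] (X →L[ℂ] X)}
  (hadj : ∀ (a : A) (ξ η : X), (inner A (φ a ξ) η : A) = inner A ξ (φ (star a) η))
include hadj

lemma map_star_eq_zero {k : A} (hk : φ k = 0) : φ (star k) = 0 := by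
  ext η
  refine inner_self.mp ?_
  rw [hadj, star_star, hk, zero_apply, inner_zero_right]

lemma injOn_kerAnnihilator : Set.InjOn φ (kerAnnihilator φ) := fun a ha b hb hab => by
  have hd : φ (star (a - b)) = 0 := map_star_eq_zero hadj (by rw [map_sub, hab, sub_self])
  refine sub_eq_zero.mp <| (CStarRing.mul_star_self_eq_zero_iff _).mp ?_
  rw [sub_mul, ha _ hd, hb _ hd, sub_self]

lemma star_mem_kerAnnihilator {a : A} (ha : a ∈ kerAnnihilator φ) :
    star a ∈ kerAnnihilator φ := by
  have hright : ∀ k, φ k = 0 → k * a = 0 := fun k hk => by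
    have h : a * (star a * star k) = 0 :=
      ha _ (by rw [map_mul, map_star_eq_zero hadj hk, mul_zero])
    refine (CStarRing.mul_star_self_eq_zero_iff _).mp ?_
    rw [star_mul, mul_assoc, h, mul_zero]
  intro k hk
  rw [← star_star k, ← star_mul, hright _ (map_star_eq_zero hadj hk), star_zero]

end Kernel

variable {φ : A →ₙₐ[ℂ] (X →L[ℂ] X)}
  (hadj : ∀ (a : A) (ξ η : X), (inner A (φ a ξ) η : A) = inner A ξ (φ (star a) η))
include hadj

lemma map_star_eq_rankOne {q : A} {ξ η : X} (hq : φ q = rankOne A η ξ) :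
    φ (star q) = rankOne A ξ η := by
  ext ζ
  refine ext_inner_left (A := A) fun z => ?_
  rw [← hadj, hq, inner_rankOne_apply_left]

lemma map_eq_zero_of_inner_map_nonpos {b : A} (hb : 0 ≤ b) (h : ∀ ζ, inner A ζ (φ b ζ) ≤ 0) :
    φ b = 0 := by
  obtain ⟨s, rfl⟩ := CStarAlgebra.nonneg_iff_eq_star_mul_self.mp hb
  have hs : ∀ ζ, φ s ζ = 0 := fun ζ => by
    refine inner_self.mp (le_antisymm ?_ inner_self_nonneg)
    simpa only [hadj, map_mul, mul_apply_eq_comp] using h ζ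
  ext ζ
  simp [hs]

lemma nonneg_of_mem_kerAnnihilator {a : A} (ha : a ∈ kerAnnihilator φ) (hsa : IsSelfAdjoint a)
    (hpos : ∀ ζ, 0 ≤ inner A ζ (φ a ζ)) : 0 ≤ a := by
  set n := a⁻
  have hn : 0 ≤ n := CFC.negPart_nonneg a
  have hns : star n = n := IsSelfAdjoint.of_nonneg hn
  have hna : n * a = -(n * n) := by
    conv_lhs => rw [← CFC.posPart_sub_negPart a hsa]
    rw [mul_sub, CFC.negPart_mul_posPart, zero_sub]
  have han : a * n = -(n * n) := by
    conv_lhs => rw [← CFC.posPart_sub_negPart a hsa]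
    rw [sub_mul, CFC.posPart_mul_negPart, zero_sub]
  have hconj (ζ : X) : inner A (φ n ζ) (φ a (φ n ζ)) = -inner A ζ (φ (n * n * n) ζ) := by
    rw [hadj, hns, ← mul_apply_eq_comp, ← mul_apply_eq_comp, ← map_mul, ← map_mul, hna, neg_mul,
      map_neg, neg_apply, inner_neg_right]
  have hcube : φ (n * n * n) = 0 :=
    map_eq_zero_of_inner_map_nonpos hadj (by simpa only [hns] using star_left_conjugate_nonneg hn n)
      fun ζ => neg_nonneg.mp (hconj ζ ▸ hpos (φ n ζ))
  have hn4 : n * n * (n * n) = 0 :=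
    calc n * n * (n * n) = -(a * n * n * n) := by rw [han]; noncomm_ring
      _ = -(a * (n * n * n)) := by simp only [mul_assoc]
      _ = 0 := by rw [ha _ hcube, neg_zero]
  have hn2 : n * n = 0 := (CStarRing.star_mul_self_eq_zero_iff _).mp (by rwa [star_mul, hns])
  have hn0 : n = 0 := (CStarRing.star_mul_self_eq_zero_iff _).mp (by rwa [hns])
  exact CStarAlgebra.nonneg_iff_isSelfAdjoint_and_negPart_eq_zero.mpr ⟨hsa, hn0⟩

end LeftAction

/-- Let `φ` be a left action of `A` on a Hilbert `A`-module `X` with `φ(J_X) = K(X)`.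
Then `X` becomes a Hilbert `A`-bimodule with left inner product
`⟨⟨ξ, η⟩⟩ = (φ|_{J_X})⁻¹(θ_{ξ,η}) ∈ J_X`: there is a map `L : X × X → A` taking values in
`J_X` with `φ(L(ξ,η)) = θ_{ξ,η}`, linear in the first variable, and satisfying
`⟨⟨φ(a)ξ, η⟩⟩ = a⟨⟨ξ, η⟩⟩`, `⟨⟨ξ, η⟩⟩ = ⟨⟨η, ξ⟩⟩*`, `⟨⟨ξ, ξ⟩⟩ ≥ 0` and
`φ(⟨⟨ξ, η⟩⟩)ζ = ξ·⟪η, ζ⟫_X`. -/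
theorem bimodule_of_phi_JX_eq_compacts (φ : A →ₙₐ[ℂ] (X →L[ℂ] X))
    (hmod : ∀ (a : A) (ξ : X) (b : A), φ a (ξ <• b) = (φ a ξ) <• b)
    (hadj : ∀ (a : A) (ξ η : X), (inner A (φ a ξ) η : A) = inner A ξ (φ (star a) η))
    (hsurj : (fun a : A => φ a) '' KatsuraIdeal φ = compactOps A X) :
    ∃ L : X → X → A,
      (∀ ξ η : X, L ξ η ∈ KatsuraIdeal φ) ∧
      (∀ ξ η ζ : X, φ (L ξ η) ζ = ξ <• (inner A η ζ : A)) ∧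
      (∀ ξ₁ ξ₂ η : X, L (ξ₁ + ξ₂) η = L ξ₁ η + L ξ₂ η) ∧
      (∀ (c : ℂ) (ξ η : X), L (c • ξ) η = c • L ξ η) ∧
      (∀ (a : A) (ξ η : X), L (φ a ξ) η = a * L ξ η) ∧
      (∀ ξ η : X, L ξ η = star (L η ξ)) ∧
      (∀ ξ : X, 0 ≤ L ξ ξ) := by
  have hpre (ξ η : X) : ∃ a ∈ KatsuraIdeal φ, φ a = rankOne A ξ η := by
    rw [← Set.mem_image, hsurj]
    exact rankOne_mem_compactOps ξ η
  choose L hLJ hLφ using hpre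
  have hL (ξ η : X) : L ξ η ∈ kerAnnihilator φ := (hLJ ξ η).2
  have hchar {ξ η : X} {b : A} (hb : b ∈ kerAnnihilator φ) (hφb : φ b = rankOne A ξ η) :
      L ξ η = b :=
    injOn_kerAnnihilator hadj (hL ξ η) hb ((hLφ ξ η).trans hφb.symm)
  have hstar (ξ η : X) : L ξ η = star (L η ξ) :=
    hchar (star_mem_kerAnnihilator hadj (hL η ξ)) (map_star_eq_rankOne hadj (hLφ η ξ))
  refine ⟨L, hLJ, fun ξ η ζ => by rw [hLφ, rankOne_apply], fun ξ₁ ξ₂ η => ?_, fun c ξ η => ?_,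
    fun a ξ η => ?_, hstar, fun ξ => ?_⟩
  · refine hchar (add_mem_kerAnnihilator (hL _ _) (hL _ _)) ?_
    rw [map_add, hLφ, hLφ, rankOne_add_left]
  · refine hchar (smul_mem_kerAnnihilator c (hL _ _)) ?_
    rw [map_smul, hLφ, rankOne_smul_left]
  · refine hchar (mul_mem_kerAnnihilator a (hL _ _)) ?_
    rw [map_mul, hLφ, mul_rankOne (hmod a)]
  · refine nonneg_of_mem_kerAnnihilator hadj (hL ξ ξ) (hstar ξ ξ).symm fun ζ => ?_
    rw [hLφ]
    exact inner_rankOne_self_apply_nonneg ξ ζ
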